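/- For an indeterminate (or generic) q and x in a field, det(((x;q)_{i+j+m})_{i,j=0}^{n-1}) = q^{2·binom(n,3) + m·binom(n,2)} · x^{binom(n,2)} · ∏_{k=0}^{n-1} (x;q)_{k+m} · (q;q)_k, for all n ≥ 1 and m ≥ 0. -/

import Mathlib

/-- The q-Pochhammer symbol `(x; q)_n = ∏_{j=0}^{n-1} (1 - q^j x)`. -/
def qPoch {R : Type*} [CommRing R] (q x : R) (n : ℕ) : R :=
  ∏ j ∈ Finset.range n, (1 - q ^ j * x)

/-!
Splitting `(x;q)_{i+j+m} = (x;q)_{i+m} (q^{i+m} x;q)_j` pulls `(x;q)_{i+m}` out of row `i`. What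
remains in position `(i, j)` is the value at `y = q^i` of the polynomial `∏_{l<j} (1 - q^{m+l} x y)`
of degree `j` and leading coefficient `(-q^m x)^j q^{binom(j,2)}`, so the matrix factors as the
Vandermonde matrix of the nodes `q^i` times an upper triangular matrix. Finally
`∏_{i<j<n} (q^j - q^i) = (-1)^{binom(n,2)} q^{binom(n,3)} ∏_{j<n} (q;q)_j`.
-/

open Finset Polynomial Matrix

theorem Matrix.det_eval_matrixOfPolynomials_eq_det_vandermonde_mul_prod_coeff
    {R : Type*} [CommRing R] {n : ℕ} (v : Fin n → R) (p : Fin n → R[X])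
    (h_deg : ∀ i, (p i).natDegree ≤ i) :
    (of fun i j => (p j).eval (v i)).det = (vandermonde v).det * ∏ i, (p i).coeff i := by
  rw [eval_matrixOfPolynomials_eq_vandermonde_mul_matrixOfPolynomials v p h_deg, det_mul,
    det_of_isUpperTriangular (matrixOfPolynomials_blockTriangular p h_deg)]
  rfl

section CommMonoid

variable {M : Type*} [CommMonoid M]

theorem Finset.prod_range_pow_eq_pow_choose_two (a : M) (n : ℕ) :
    ∏ i ∈ range n, a ^ i = a ^ n.choose 2 := by
  rw [prod_pow_eq_pow_sum, sum_range_id, Nat.choose_two_right]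

theorem Finset.prod_range_pow_mul_pow_choose_two (a b : M) (n : ℕ) :
    ∏ j ∈ range n, a ^ j * b ^ j.choose 2 = a ^ n.choose 2 * b ^ n.choose 3 := by
  induction n with
  | zero => simp
  | succ n ih =>
    rw [prod_range_succ, ih, Nat.choose_succ_succ' n 1, Nat.choose_succ_succ' n 2,
      Nat.choose_one_right, pow_add, pow_add]
    ac_rfl

end CommMonoid

section CommRing

variable {R : Type*} [CommRing R]

theorem qPoch_add (q x : R) (a b : ℕ) :
    qPoch q x (a + b) = qPoch q x a * qPoch q (q ^ a * x) b := by
  rw [qPoch, prod_range_add]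
  congr 1
  exact prod_congr rfl fun l _ => by ring

theorem prod_range_pow_sub_pow (q : R) (j : ℕ) :
    ∏ i ∈ range j, (q ^ j - q ^ i) = (-1) ^ j * q ^ j.choose 2 * qPoch q q j := by
  have hfactor : ∀ i ∈ range j, q ^ j - q ^ i = -1 * q ^ i * (1 - q ^ (j - 1 - i) * q) := by
    intro i hi
    obtain ⟨k, rfl⟩ : ∃ k, j = i + k + 1 := ⟨j - 1 - i, by grind⟩
    rw [show i + k + 1 - 1 - i = k by omega]
    ring
  rw [prod_congr rfl hfactor, prod_mul_distrib, prod_mul_distrib, prod_const, card_range,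
    prod_range_pow_eq_pow_choose_two, prod_range_reflect (fun k => 1 - q ^ k * q), qPoch]

theorem det_vandermonde_pow (q : R) (n : ℕ) :
    (vandermonde fun i : Fin n => q ^ (i : ℕ)).det
      = (-1) ^ n.choose 2 * q ^ n.choose 3 * ∏ k ∈ range n, qPoch q q k := by
  have hIio : ∀ j : Fin n, ∏ i ∈ Iio j, (q ^ (j : ℕ) - q ^ (i : ℕ))
      = ∏ i ∈ range j, (q ^ (j : ℕ) - q ^ i) := by
    intro j
    rw [← Nat.Iio_eq_range, ← Fin.map_valEmbedding_Iio, prod_map]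
    rfl
  rw [det_vandermonde, prod_comm' (t' := univ) (s' := Iio) (by simp),
    prod_congr rfl fun j _ => hIio j,
    Fin.prod_univ_eq_prod_range (fun j => ∏ i ∈ range j, (q ^ j - q ^ i)),
    prod_congr rfl fun j _ => prod_range_pow_sub_pow q j, prod_mul_distrib,
    prod_range_pow_mul_pow_choose_two]

noncomputable def qPochPoly (q c : R) (j : ℕ) : R[X] :=
  ∏ l ∈ range j, (1 - C (q ^ l * c) * X)

theorem eval_qPochPoly (q c y : R) (j : ℕ) :
    (qPochPoly q c j).eval y = qPoch q (y * c) j := by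
  simp only [qPochPoly, qPoch, eval_prod, eval_sub, eval_one, eval_mul, eval_C, eval_X]
  exact prod_congr rfl fun l _ => by ring

theorem natDegree_one_sub_C_mul_X_le (a : R) : (1 - C a * X).natDegree ≤ 1 := by
  compute_degree

theorem natDegree_qPochPoly_le (q c : R) (j : ℕ) : (qPochPoly q c j).natDegree ≤ j := by
  refine (natDegree_prod_le _ _).trans ?_
  refine (sum_le_sum fun l _ => natDegree_one_sub_C_mul_X_le (q ^ l * c)).trans ?_
  simp

theorem coeff_qPochPoly_self (q c : R) (j : ℕ) :
    (qPochPoly q c j).coeff j = (-c) ^ j * q ^ j.choose 2 := by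
  have h := coeff_prod_of_natDegree_le (s := range j) (fun l => 1 - C (q ^ l * c) * X) 1
    fun l _ => natDegree_one_sub_C_mul_X_le _
  rw [card_range, mul_one] at h
  have hcoeff : ∀ l ∈ range j, (1 - C (q ^ l * c) * X).coeff 1 = -c * q ^ l := fun l _ => by
    simp only [coeff_sub, coeff_one, coeff_C_mul_X, one_ne_zero, if_false, if_true]
    ring
  rw [qPochPoly, h, prod_congr rfl hcoeff, prod_mul_distrib, prod_const, card_range,
    prod_range_pow_eq_pow_choose_two]

theorem qPoch_add_add_eq_mul_eval_qPochPoly (q x : R) (i j m : ℕ) :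
    qPoch q x (i + j + m) = qPoch q x (i + m) * (qPochPoly q (q ^ m * x) j).eval (q ^ i) := by
  rw [eval_qPochPoly, add_right_comm, qPoch_add, pow_add, mul_assoc]

theorem det_qPoch_hankel (q x : R) (n m : ℕ) :
    (of fun i j : Fin n => qPoch q x (i.1 + j.1 + m)).det
      = q ^ (2 * n.choose 3 + m * n.choose 2) * x ^ n.choose 2 *
          ∏ k ∈ range n, qPoch q x (k + m) * qPoch q q k := by
  have hfactor : (of fun i j : Fin n => qPoch q x (i.1 + j.1 + m)).det
      = (∏ i : Fin n, qPoch q x (i.1 + m)) *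
          (of fun i j : Fin n => (qPochPoly q (q ^ m * x) j).eval (q ^ (i : ℕ))).det := by
    rw [← det_mul_column]
    congr with i j
    exact qPoch_add_add_eq_mul_eval_qPochPoly q x i j m
  have hsign : ((-1 : R) ^ n.choose 2) * (-1) ^ n.choose 2 = 1 := by
    rw [← mul_pow]; norm_num
  rw [hfactor,
    det_eval_matrixOfPolynomials_eq_det_vandermonde_mul_prod_coeff _ _
      fun j => natDegree_qPochPoly_le _ _ j,
    det_vandermonde_pow, Fin.prod_univ_eq_prod_range (fun i => qPoch q x (i + m)),
    Fin.prod_univ_eq_prod_range (fun j => (qPochPoly q (q ^ m * x) j).coeff j),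
    prod_congr rfl fun j _ => coeff_qPochPoly_self q (q ^ m * x) j,
    prod_range_pow_mul_pow_choose_two, prod_mul_distrib]
  linear_combination (q ^ (2 * n.choose 3 + m * n.choose 2) * x ^ n.choose 2 *
    (∏ k ∈ range n, qPoch q x (k + m)) * ∏ k ∈ range n, qPoch q q k) * hsign

end CommRing

theorem stmt_15_general {F : Type*} [Field F] (q x : F) (n m : ℕ) :
    Matrix.det (Matrix.of (fun i j : Fin n => qPoch q x (i.1 + j.1 + m)))
      = q ^ (2 * n.choose 3 + m * n.choose 2) * x ^ n.choose 2 *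
          ∏ k ∈ Finset.range n, qPoch q x (k + m) * qPoch q q k :=
  det_qPoch_hankel q x n m

theorem stmt_15 {F : Type*} [Field F] (q x : F) (n m : ℕ) (hn : 1 ≤ n) :
    Matrix.det (Matrix.of (fun i j : Fin n => qPoch q x (i.1 + j.1 + m)))
      = q ^ (2 * n.choose 3 + m * n.choose 2) * x ^ n.choose 2 *
          ∏ k ∈ Finset.range n, qPoch q x (k + m) * qPoch q q k :=
  stmt_15_general q x n m
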